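/- arXiv:1811.00321 — 4 statements merged into one kernel-verified Lean document; each statement's English description precedes it below -/
import Mathlib

section
/- Let F : ℝⁿ → ℝⁿ be a bounded C¹ map with 0 ≤ Fᵢ(x) ≤ M for all x and each coordinate i, let τ > 0, and let A, B ∈ ℝ be constants. Then the differential equation x' = -(1/τ + F(x))·x + A + B·F(x) (where the product F(x)·x is componentwise) with any initial condition x(0) ∈ ℝⁿ has a unique solution defined on all of [0, ∞). -/
open Set Metric NNReal

/-!
The right-hand side is `C¹`, hence Lipschitz on every box `[-K, K]ⁿ`, which gives uniqueness
among solutions that stay in a box. For `K ≥ τ (|A| + |B| M)` and `K ≥ ‖x(0)‖` the field points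
into the box on each face: where `xᵢ ≥ K` the decay `-(1/τ + Fᵢ) xᵢ ≤ -K/τ` beats the forcing
`A + B Fᵢ ≤ |A| + |B| M`, and symmetrically where `xᵢ ≤ -K`. So every forward solution stays in the
box. For existence, precompose the field with the clamp onto the box: the result is globally
Lipschitz and bounded, so has a global solution by Picard–Lindelöf; this solution stays in the
box, where the clamped and original fields agree.
-/

theorem image_le_of_hasDerivAt_nonpos_above {f f' : ℝ → ℝ} {a b K : ℝ}
    (hf : ∀ t ∈ Icc a b, HasDerivAt f (f' t) t) (ha : f a ≤ K)
    (hK : ∀ t ∈ Icc a b, K ≤ f t → f' t ≤ 0) :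
    ∀ t ∈ Icc a b, f t ≤ K := by
  -- fence `f` by the lines `K + ε (t - a)` of positive slope, then let `ε → 0`
  have hfence : ∀ ε > 0, ∀ t ∈ Icc a b, f t ≤ K + ε * (t - a) := by
    intro ε hε
    refine image_le_of_deriv_right_lt_deriv_boundary (B' := fun _ => ε)
      (HasDerivAt.continuousOn hf) (fun t ht => (hf t (Ico_subset_Icc_self ht)).hasDerivWithinAt)
      (by simpa using ha)
      (fun t => ((hasDerivAt_id t).sub_const a |>.const_mul ε).const_add K
        |>.congr_deriv (mul_one ε))
      fun t ht hft => (hK t (Ico_subset_Icc_self ht) ?_).trans_lt hε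
    rw [hft]
    nlinarith [ht.1]
  intro t ht
  refine le_of_forall_pos_le_add fun ε hε => ?_
  have hta : 0 ≤ t - a := sub_nonneg.2 ht.1
  calc f t ≤ K + ε / (t - a + 1) * (t - a) := hfence _ (by positivity) t ht
    _ ≤ K + ε := by
      gcongr
      rw [div_mul_eq_mul_div, div_le_iff₀ (by positivity)]
      nlinarith

section Box

variable {ι : Type*}

def clampBox (K : ℝ) (z : ι → ℝ) : ι → ℝ := fun i => max (-K) (min K (z i))

def PointsIntoBox (v : (ι → ℝ) → ι → ℝ) (K : ℝ) : Prop :=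
  ∀ z i, (K ≤ z i → v z i ≤ 0) ∧ (z i ≤ -K → 0 ≤ v z i)

theorem PointsIntoBox.comp_clampBox {v : (ι → ℝ) → ι → ℝ} {K : ℝ}
    (hv : PointsIntoBox v K) (hK : 0 ≤ K) : PointsIntoBox (fun z => v (clampBox K z)) K := by
  intro z i
  constructor
  · intro hz
    have hclamp : clampBox K z i = K := by simp [clampBox, min_eq_left hz, hK]
    exact (hv _ i).1 hclamp.ge
  · intro hz
    have hclamp : clampBox K z i = -K := by
      simp [clampBox, min_eq_right (hz.trans (by linarith : -K ≤ K)), hz]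
    exact (hv _ i).2 hclamp.le

variable [Fintype ι] {K : ℝ}

theorem mem_closedBall_zero_iff_forall_abs_le (hK : 0 ≤ K) {z : ι → ℝ} :
    z ∈ closedBall 0 K ↔ ∀ i, |z i| ≤ K := by
  simp only [mem_closedBall_zero_iff, pi_norm_le_iff_of_nonneg hK, Real.norm_eq_abs]

theorem lipschitzWith_clampBox (K : ℝ) : LipschitzWith 1 (clampBox (ι := ι) K) := by
  have hclamp : LipschitzWith 1 fun a : ℝ => max (-K) (min K a) :=
    (LipschitzWith.id.const_min K).const_max (-K)
  refine LipschitzWith.of_dist_le_mul fun z z' => ?_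
  rw [NNReal.coe_one, one_mul]
  refine (dist_pi_le_iff dist_nonneg).2 fun i => ?_
  calc dist (clampBox K z i) (clampBox K z' i) ≤ 1 * dist (z i) (z' i) :=
        mod_cast hclamp.dist_le_mul (z i) (z' i)
    _ ≤ dist z z' := by rw [one_mul]; exact dist_le_pi_dist z z' i

theorem clampBox_mem_closedBall (hK : 0 ≤ K) (z : ι → ℝ) : clampBox K z ∈ closedBall 0 K :=
  (mem_closedBall_zero_iff_forall_abs_le hK).2 fun i =>
    abs_le.2 ⟨le_max_left _ _, max_le (by linarith) (min_le_left _ _)⟩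

theorem clampBox_eq_self {z : ι → ℝ} (hz : z ∈ closedBall 0 K) : clampBox K z = z := by
  have hK : 0 ≤ K := nonempty_closedBall.1 ⟨z, hz⟩
  funext i
  obtain ⟨hlo, hhi⟩ := abs_le.1 ((mem_closedBall_zero_iff_forall_abs_le hK).1 hz i)
  simp [clampBox, min_eq_right hhi, max_eq_right hlo]

theorem PointsIntoBox.mem_closedBall_of_hasDerivAt {v : (ι → ℝ) → ι → ℝ}
    (hv : PointsIntoBox v K) {y : ℝ → ι → ℝ} (hy0 : y 0 ∈ closedBall 0 K)
    (hy : ∀ t, 0 ≤ t → HasDerivAt y (v (y t)) t) {t : ℝ} (ht : 0 ≤ t) :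
    y t ∈ closedBall 0 K := by
  have hK : 0 ≤ K := nonempty_closedBall.1 ⟨_, hy0⟩
  have hyi : ∀ i, ∀ s ∈ Icc 0 t, HasDerivAt (fun s => y s i) (v (y s) i) s :=
    fun i s hs => hasDerivAt_pi.1 (hy s hs.1) i
  rw [mem_closedBall_zero_iff_forall_abs_le hK] at hy0 ⊢
  intro i
  refine abs_le.2 ⟨?_, ?_⟩
  · have := image_le_of_hasDerivAt_nonpos_above (f := fun s => -y s i) (K := K)
      (fun s hs => (hyi i s hs).neg) (by linarith [(abs_le.1 (hy0 i)).1])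
      (fun s _ hs => neg_nonpos.2 ((hv _ i).2 (by linarith))) t ⟨ht, le_rfl⟩
    linarith
  · exact image_le_of_hasDerivAt_nonpos_above (hyi i) (abs_le.1 (hy0 i)).2
      (fun s _ hs => (hv _ i).1 hs) t ⟨ht, le_rfl⟩

end Box

section GlobalExistence

variable {E : Type*} [NormedAddCommGroup E] [NormedSpace ℝ E] [CompleteSpace E]
  {w : E → E} {L : ℝ≥0} {C : ℝ}

theorem exists_forall_mem_Ioo_hasDerivAt_of_lipschitzWith (hw : LipschitzWith L w)
    (hC : ∀ z, ‖w z‖ ≤ C) (x₀ : E) (T : ℝ≥0) :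
    ∃ x : ℝ → E, x 0 = x₀ ∧ ∀ t ∈ Ioo (-(T : ℝ)) T, HasDerivAt x (w (x t)) t := by
  set C' : ℝ≥0 := ⟨C, (norm_nonneg _).trans (hC x₀)⟩
  have hPL : IsPicardLindelof (fun _ => w) (tmin := -T) (tmax := T)
      ⟨0, by simp, by simp⟩ x₀ (C' * T) 0 C' L :=
    .of_time_independent (fun z _ => hC z) hw.lipschitzOnWith (by simp)
  obtain ⟨x, hx₀, hx⟩ := hPL.exists_eq_forall_mem_Icc_hasDerivWithinAt₀
  exact ⟨x, hx₀, fun t ht => (hx t (Ioo_subset_Icc_self ht)).hasDerivAt (Icc_mem_nhds ht.1 ht.2)⟩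

theorem exists_forall_hasDerivAt_of_lipschitzWith (hw : LipschitzWith L w)
    (hC : ∀ z, ‖w z‖ ≤ C) (x₀ : E) :
    ∃ x : ℝ → E, x 0 = x₀ ∧ ∀ t, HasDerivAt x (w (x t)) t := by
  choose x hx₀ hx using exists_forall_mem_Ioo_hasDerivAt_of_lipschitzWith hw hC x₀
  have hagree : ∀ {T T' : ℝ≥0} {t : ℝ}, |t| < T → |t| < T' → x T t = x T' t := by
    intro T T' t hT hT'
    have hsub : ∀ {S : ℝ≥0}, min T T' ≤ S →
        Ioo (-((min T T' : ℝ≥0) : ℝ)) (min T T') ⊆ Ioo (-(S : ℝ)) S := fun h =>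
      Ioo_subset_Ioo (neg_le_neg (mod_cast h)) (mod_cast h)
    refine ODE_solution_unique_of_mem_Ioo (v := fun _ => w) (s := fun _ => univ)
      (fun _ _ => hw.lipschitzOnWith) (t₀ := 0) ?_
      (fun s hs => ⟨hx T s (hsub (min_le_left _ _) hs), mem_univ _⟩)
      (fun s hs => ⟨hx T' s (hsub (min_le_right _ _) hs), mem_univ _⟩)
      ((hx₀ T).trans (hx₀ T').symm) ?_
    · have : (0 : ℝ) < min T T' := by simpa using (abs_nonneg t).trans_lt (lt_min hT hT')
      exact ⟨by linarith, this⟩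
    · exact abs_lt.1 (by simpa using lt_min hT hT')
  refine ⟨fun t => x (‖t‖₊ + 1) t, ?_, fun t => ?_⟩
  · exact hx₀ _
  have hlt : ∀ s : ℝ, |s| < ((‖s‖₊ + 1 : ℝ≥0) : ℝ) := fun s => by simp
  have ht : t ∈ Ioo (-((‖t‖₊ + 1 : ℝ≥0) : ℝ)) (‖t‖₊ + 1 : ℝ≥0) := abs_lt.1 (hlt t)
  refine (hx _ t ht).congr_of_eventuallyEq ?_
  filter_upwards [isOpen_Ioo.mem_nhds ht] with s hs
  exact hagree (hlt s) (abs_lt.2 hs)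

end GlobalExistence

section ForwardSolutions

variable {ι : Type*} [Fintype ι] {v : (ι → ℝ) → ι → ℝ} {K : ℝ} {L : ℝ≥0}

theorem PointsIntoBox.exists_forall_hasDerivAt (hv : PointsIntoBox v K)
    (hL : LipschitzOnWith L v (closedBall 0 K)) {x₀ : ι → ℝ} (hx₀ : x₀ ∈ closedBall 0 K) :
    ∃ x : ℝ → ι → ℝ, x 0 = x₀ ∧ ∀ t, 0 ≤ t → HasDerivAt x (v (x t)) t := by
  have hK : 0 ≤ K := nonempty_closedBall.1 ⟨_, hx₀⟩
  set w := fun z => v (clampBox K z)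
  have hw : LipschitzWith (L * 1) w := lipschitzOnWith_univ.1 <|
    hL.comp (lipschitzWith_clampBox K).lipschitzOnWith fun z _ => clampBox_mem_closedBall hK z
  obtain ⟨C, hC⟩ := (isCompact_closedBall (0 : ι → ℝ) K).exists_bound_of_continuousOn
    hL.continuousOn
  obtain ⟨x, hx₀', hx⟩ := exists_forall_hasDerivAt_of_lipschitzWith hw
    (fun z => hC _ (clampBox_mem_closedBall hK z)) x₀
  have hxK : ∀ t, 0 ≤ t → x t ∈ closedBall 0 K := fun t ht =>
    (hv.comp_clampBox hK).mem_closedBall_of_hasDerivAt (hx₀' ▸ hx₀) (fun s _ => hx s) ht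
  refine ⟨x, hx₀', fun t ht => ?_⟩
  simpa only [w, clampBox_eq_self (hxK t ht)] using hx t

theorem PointsIntoBox.eqOn_Ici_of_hasDerivAt (hv : PointsIntoBox v K)
    (hL : LipschitzOnWith L v (closedBall 0 K)) {x y : ℝ → ι → ℝ}
    (hx₀ : x 0 ∈ closedBall 0 K) (hxy : x 0 = y 0)
    (hx : ∀ t, 0 ≤ t → HasDerivAt x (v (x t)) t) (hy : ∀ t, 0 ≤ t → HasDerivAt y (v (y t)) t) :
    EqOn x y (Ici 0) := fun _ ht =>
  ODE_solution_unique_of_mem_Icc_right (v := fun _ => v) (s := fun _ => closedBall 0 K)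
    (fun _ _ => hL)
    (HasDerivAt.continuousOn fun s hs => hx s hs.1)
    (fun s hs => (hx s hs.1).hasDerivWithinAt)
    (fun _ hs => hv.mem_closedBall_of_hasDerivAt hx₀ hx hs.1)
    (HasDerivAt.continuousOn fun s hs => hy s hs.1)
    (fun s hs => (hy s hs.1).hasDerivWithinAt)
    (fun _ hs => hv.mem_closedBall_of_hasDerivAt (hxy ▸ hx₀) hy hs.1)
    hxy ⟨ht, le_rfl⟩

end ForwardSolutions

section LTC

variable {ι : Type*} {τ M A B : ℝ} {F : (ι → ℝ) → ι → ℝ}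

noncomputable def ltcField (τ A B : ℝ) (F : (ι → ℝ) → ι → ℝ) (z : ι → ℝ) : ι → ℝ :=
  fun i => -(1 / τ + F z i) * z i + A + B * F z i

theorem ltc_rhs_nonpos {φ r : ℝ} (hτ : 0 < τ) (hφ : 0 ≤ φ) (hφM : φ ≤ M)
    (hr : τ * (|A| + |B| * M) ≤ r) : -(1 / τ + φ) * r + A + B * φ ≤ 0 := by
  have hr0 : 0 ≤ r := le_trans (by have := hφ.trans hφM; positivity) hr
  have hdecay : r / τ ≤ (1 / τ + φ) * r := by
    rw [add_mul, one_div_mul_eq_div]; nlinarith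
  have hforce : A + B * φ ≤ r / τ :=
    calc A + B * φ ≤ |A| + |B| * M := add_le_add (le_abs_self A)
          ((le_abs_self _).trans (by rw [abs_mul, abs_of_nonneg hφ]; gcongr))
      _ ≤ r / τ := by rw [le_div_iff₀ hτ]; linarith
  linarith

theorem pointsIntoBox_ltcField {K : ℝ} (hτ : 0 < τ) (hF : ∀ z i, 0 ≤ F z i ∧ F z i ≤ M)
    (hK : τ * (|A| + |B| * M) ≤ K) : PointsIntoBox (ltcField τ A B F) K := by
  intro z i
  obtain ⟨hF0, hFM⟩ := hF z i
  constructor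
  · intro hz
    exact ltc_rhs_nonpos hτ hF0 hFM (hK.trans hz)
  · intro hz
    -- the lower face is the upper face for `(-A, -B)` and `-z`
    have := ltc_rhs_nonpos (A := -A) (B := -B) (r := -z i) hτ hF0 hFM
      (by rw [abs_neg, abs_neg]; linarith)
    simp only [ltcField]
    linarith

theorem ContDiff.ltcField [Fintype ι] {n : WithTop ℕ∞} (hF : ContDiff ℝ n F) :
    ContDiff ℝ n (ltcField τ A B F) :=
  contDiff_pi.2 fun i =>
    have hFi : ContDiff ℝ n fun z => F z i := contDiff_pi.1 hF i
    (((contDiff_const.add hFi).neg.mul (contDiff_apply ℝ ℝ i)).add contDiff_const).add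
      (contDiff_const.mul hFi)

end LTC

/-- The LTC ODE `x' = -(1/τ + F(x))·x + A + B·F(x)` (componentwise) with bounded `C¹`
right-hand side `F` has a unique solution on `[0, ∞)` for any initial condition. -/
theorem stmt_1 (n : ℕ) (τ M A B : ℝ) (hτ : 0 < τ)
    (F : (Fin n → ℝ) → (Fin n → ℝ)) (hF : ContDiff ℝ 1 F)
    (hFbound : ∀ x i, 0 ≤ F x i ∧ F x i ≤ M)
    (x0 : Fin n → ℝ) :
    ∃ x : ℝ → Fin n → ℝ,
      (x 0 = x0 ∧
        ∀ t : ℝ, 0 ≤ t → ∀ i : Fin n,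
          HasDerivAt (fun s => x s i)
            (-(1/τ + F (x t) i) * x t i + A + B * F (x t) i) t) ∧
      ∀ y : ℝ → Fin n → ℝ,
        (y 0 = x0 ∧
          ∀ t : ℝ, 0 ≤ t → ∀ i : Fin n,
            HasDerivAt (fun s => y s i)
              (-(1/τ + F (y t) i) * y t i + A + B * F (y t) i) t) →
        ∀ t : ℝ, 0 ≤ t → y t = x t := by
  set K := max (τ * (|A| + |B| * M)) ‖x0‖
  have hx0 : x0 ∈ closedBall 0 K := mem_closedBall_zero_iff.2 (le_max_right _ _)
  have hv : PointsIntoBox (ltcField τ A B F) K :=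
    pointsIntoBox_ltcField hτ hFbound (le_max_left _ _)
  obtain ⟨L, hL⟩ := hF.ltcField.contDiffOn.exists_lipschitzOnWith one_ne_zero
    (convex_closedBall _ _) (isCompact_closedBall (0 : Fin n → ℝ) K)
  obtain ⟨x, rfl, hx⟩ := hv.exists_forall_hasDerivAt hL hx0
  refine ⟨x, ⟨rfl, fun t ht => hasDerivAt_pi.1 (hx t ht)⟩, fun y ⟨hy0, hy⟩ t ht => ?_⟩
  have hxy : EqOn x y (Ici 0) :=
    hv.eqOn_Ici_of_hasDerivAt hL hx0 hy0.symm hx fun s hs => hasDerivAt_pi.2 (hy s hs)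
  exact (hxy ht).symm
end

section
/- Let v : [0, T] → ℝ be differentiable and satisfy C·v'(t) = g·(V_leak − v(t)) + Σⱼ₌₁ᴺ wⱼ·σⱼ(t)·(Eⱼ − v(t)) with C, g, wⱼ > 0 and σⱼ(t) ∈ [0, 1] for all t. If v(0) ≤ M where M = max{V_leak, max_j Eⱼ}, then v(t) ≤ M for all t ∈ [0, T]. -/
open Set Filter Topology

/- Compare `f` with the barriers `M + r * (x - a)`: at a contact point `f ≥ M`, so the slope
`r > 0` strictly beats `f'`; then let `r → 0⁺`. -/
theorem image_le_of_deriv_right_nonpos_of_le {f f' : ℝ → ℝ} {a b M : ℝ}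
    (hf : ContinuousOn f (Icc a b)) (hf' : ∀ x ∈ Ico a b, HasDerivWithinAt f (f' x) (Ici x) x)
    (ha : f a ≤ M) (bound : ∀ x ∈ Ico a b, M ≤ f x → f' x ≤ 0) :
    ∀ ⦃x⦄, x ∈ Icc a b → f x ≤ M := by
  intro x hx
  have barrier : ∀ r > 0, f x ≤ M + r * (x - a) := fun r hr => by
    refine image_le_of_deriv_right_lt_deriv_boundary hf hf' (B := fun y => M + r * (y - a))
      (B' := fun _ => r) (by simpa using ha) (fun y => ?_) (fun y hy hfy => ?_) hx
    · simpa using (((hasDerivAt_id y).sub_const a).const_mul r).const_add M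
    · have : M ≤ f y := hfy ▸ le_add_of_nonneg_right (mul_nonneg hr.le (sub_nonneg.2 hy.1))
      exact (bound y hy this).trans_lt hr
  have hlim : Tendsto (fun r : ℝ => M + r * (x - a)) (𝓝[>] 0) (𝓝 M) := by
    refine tendsto_nhdsWithin_of_tendsto_nhds ?_
    simpa using ((continuous_id.mul continuous_const).const_add M).tendsto (0 : ℝ)
  exact ge_of_tendsto hlim (eventually_nhdsWithin_of_forall barrier)

theorem ltc_drift_nonpos {ι : Type*} (s : Finset ι) {C g V_leak v M : ℝ} {w σ E : ι → ℝ}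
    (hC : 0 ≤ C) (hg : 0 ≤ g) (hw : ∀ j ∈ s, 0 ≤ w j) (hσ : ∀ j ∈ s, 0 ≤ σ j)
    (hV : V_leak ≤ M) (hE : ∀ j ∈ s, E j ≤ M) (hv : M ≤ v) :
    (g * (V_leak - v) + ∑ j ∈ s, w j * σ j * (E j - v)) / C ≤ 0 := by
  have leak : g * (V_leak - v) ≤ 0 := mul_nonpos_of_nonneg_of_nonpos hg (by linarith)
  have synaptic : ∑ j ∈ s, w j * σ j * (E j - v) ≤ 0 := Finset.sum_nonpos fun j hj =>
    mul_nonpos_of_nonneg_of_nonpos (mul_nonneg (hw j hj) (hσ j hj)) (by linarith [hE j hj])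
  exact div_nonpos_of_nonpos_of_nonneg (add_nonpos leak synaptic) hC

/-- Forward-invariant upper bound for the LTC neuron membrane potential. -/
theorem stmt_5 (Nn : ℕ) (hN : 0 < Nn) (T C g V_leak : ℝ) (hC : 0 < C) (hg : 0 < g)
    (w E : Fin Nn → ℝ) (hw : ∀ j, 0 < w j)
    (σ : Fin Nn → ℝ → ℝ) (hσ : ∀ j t, σ j t ∈ Set.Icc (0 : ℝ) 1)
    (v : ℝ → ℝ)
    (hv : ∀ t ∈ Set.Icc (0 : ℝ) T,
      HasDerivAt v ((g * (V_leak - v t) + ∑ j, w j * σ j t * (E j - v t)) / C) t)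
    (hM : v 0 ≤ max V_leak (Finset.univ.sup' (Finset.univ_nonempty_iff.mpr ⟨⟨0, hN⟩⟩) E)) :
    ∀ t ∈ Set.Icc (0 : ℝ) T,
      v t ≤ max V_leak (Finset.univ.sup' (Finset.univ_nonempty_iff.mpr ⟨⟨0, hN⟩⟩) E) := by
  refine image_le_of_deriv_right_nonpos_of_le
    (fun x hx => (hv x hx).continuousAt.continuousWithinAt)
    (fun x hx => (hv x (Ico_subset_Icc_self hx)).hasDerivWithinAt) hM fun x _ hvx => ?_
  exact ltc_drift_nonpos _ hC.le hg.le (fun j _ => (hw j).le) (fun j _ => (hσ j x).1)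
    (le_max_left _ _) (fun j hj => (Finset.le_sup' E hj).trans (le_max_right _ _)) hvx
end

section
/- Let v : [0, T] → ℝ be differentiable and satisfy C·v'(t) = g·(V_leak − v(t)) + Σⱼ₌₁ᴺ wⱼ·σⱼ(t)·(Eⱼ − v(t)) with C, g, wⱼ > 0 and σⱼ(t) ∈ [0, 1]. If v(0) ≥ m where m = min{V_leak, min_j Eⱼ}, then v(t) ≥ m for all t ∈ [0, T]. -/
/-!
Below the level `m` every term of the vector field is nonnegative and the leak term is strictly
positive, so `v` is strictly increasing whenever `v < m`. A fencing argument against the constant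
barrier `m - ε` then shows that `v` can never cross below `m - ε`, for every `ε > 0`.
-/

open Set

theorem le_image_of_deriv_right_pos_of_image_lt {f f' : ℝ → ℝ} {a b m : ℝ}
    (hf : ContinuousOn f (Icc a b)) (hf' : ∀ x ∈ Ico a b, HasDerivWithinAt f (f' x) (Ici x) x)
    (ha : m ≤ f a) (hpos : ∀ x ∈ Ico a b, f x < m → 0 < f' x) :
    ∀ ⦃x⦄, x ∈ Icc a b → m ≤ f x := by
  intro x hx
  refine le_of_forall_pos_le_add fun ε hε => ?_
  have hfence : -f x ≤ ε - m :=
    image_le_of_deriv_right_lt_deriv_boundary (f := fun y => -f y) (B := fun _ => ε - m)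
      (B' := fun _ => 0) hf.neg (fun y hy => (hf' y hy).neg) (by linarith)
      (fun y => hasDerivAt_const y _)
      (fun y hy hyB => neg_neg_of_pos (hpos y hy (by linarith))) hx
  linarith

theorem ltc_drift_pos_of_lt {ι : Type*} [Fintype ι] {C g V_leak m x : ℝ} {w s E : ι → ℝ}
    (hC : 0 < C) (hg : 0 < g) (hw : ∀ j, 0 ≤ w j) (hs : ∀ j, 0 ≤ s j)
    (hmV : m ≤ V_leak) (hmE : ∀ j, m ≤ E j) (hx : x < m) :
    0 < (g * (V_leak - x) + ∑ j, w j * s j * (E j - x)) / C := by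
  have hleak : 0 < g * (V_leak - x) := mul_pos hg (by linarith)
  have hsyn : 0 ≤ ∑ j, w j * s j * (E j - x) :=
    Finset.sum_nonneg fun j _ =>
      mul_nonneg (mul_nonneg (hw j) (hs j)) (by linarith [hmE j])
  positivity

/-- Forward-invariant lower bound for the LTC neuron membrane potential. -/
theorem stmt_6 (Nn : ℕ) (hN : 0 < Nn) (T C g V_leak : ℝ) (hC : 0 < C) (hg : 0 < g)
    (w E : Fin Nn → ℝ) (hw : ∀ j, 0 < w j)
    (σ : Fin Nn → ℝ → ℝ) (hσ : ∀ j t, σ j t ∈ Set.Icc (0 : ℝ) 1)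
    (v : ℝ → ℝ)
    (hv : ∀ t ∈ Set.Icc (0 : ℝ) T,
      HasDerivAt v ((g * (V_leak - v t) + ∑ j, w j * σ j t * (E j - v t)) / C) t)
    (hm : min V_leak (Finset.univ.inf' (Finset.univ_nonempty_iff.mpr ⟨⟨0, hN⟩⟩) E) ≤ v 0) :
    ∀ t ∈ Set.Icc (0 : ℝ) T,
      min V_leak (Finset.univ.inf' (Finset.univ_nonempty_iff.mpr ⟨⟨0, hN⟩⟩) E) ≤ v t := by
  set m := min V_leak (Finset.univ.inf' (Finset.univ_nonempty_iff.mpr ⟨⟨0, hN⟩⟩) E)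
  have hmE : ∀ j, m ≤ E j := fun j =>
    (min_le_right _ _).trans (Finset.inf'_le _ (Finset.mem_univ j))
  exact le_image_of_deriv_right_pos_of_image_lt
    (fun t ht => (hv t ht).continuousAt.continuousWithinAt)
    (fun t ht => (hv t (Ico_subset_Icc_self ht)).hasDerivWithinAt) hm
    (fun t _ hlt => ltc_drift_pos_of_lt hC hg (fun j => (hw j).le) (fun j => (hσ j t).1)
      (min_le_left _ _) hmE hlt)
end

section
/- Let z̃ = (x̃, ỹ) where x̃ solves ẋ̃ = −x̃/τ + A₁ + W_l B σ(C x̃ + μ) with x̃(0) = x₀ and ỹ(0) = C x₀ + μ. Then z̃ solves the (n+N)-dimensional autonomous system ż̃ = −z̃/τ + W σ(z̃) + A + μ₁/τ, where W is the block matrix [[0, W_l B],[0, C W_l B]], A = (A₁, C A₁), and μ₁ = (0, μ). Conversely any solution of the latter with this initial condition projects to a solution of the former. -/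
/-! The output `ỹ = C x̃ + μ` is an affine image of `x̃`, so `ỹ' = C x̃'`, and rewriting
`C (-x̃/τ + W_l B σ(ỹ) + A₁)` in terms of `ỹ` gives the `ỹ`-equation of the lifted system.
Conversely, along a solution of the lifted system both `ỹ` and `C x̃ + μ` solve the linear
equation `u' = -u/τ + F(t)` with the same forcing `F(t) = C W_l B σ(ỹ(t)) + C A₁ + μ/τ` and the
same initial value, so they coincide by uniqueness for Lipschitz ODEs; the `x̃`-equation of the
lifted system is then the original one. -/

open Matrix

theorem eq_of_hasDerivAt_smul_add {E : Type*} [NormedAddCommGroup E] [NormedSpace ℝ E]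
    {c : ℝ} {f y z : ℝ → E} {t₀ : ℝ}
    (hy : ∀ t, HasDerivAt y (c • y t + f t) t) (hz : ∀ t, HasDerivAt z (c • z t + f t) t)
    (h₀ : y t₀ = z t₀) : y = z :=
  ODE_solution_unique_univ (v := fun t u => c • u + f t) (s := fun _ => Set.univ)
    (fun t => ((lipschitzWith_smul c).add (LipschitzWith.const (f t))).lipschitzOnWith)
    (fun t => ⟨hy t, trivial⟩) (fun t => ⟨hz t, trivial⟩) h₀

theorem HasDerivAt.mulVec_add_const {m n : Type*} [Fintype m] [Fintype n]
    (C : Matrix m n ℝ) (μ : m → ℝ) {x : ℝ → n → ℝ} {x' : n → ℝ} {t : ℝ}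
    (hx : HasDerivAt x x' t) : HasDerivAt (fun s => C *ᵥ x s + μ) (C *ᵥ x') t := by
  have hC := (LinearMap.toContinuousLinearMap (mulVecLin C)).hasFDerivAt.comp_hasDerivAt t hx
  exact hC.add_const μ

theorem mulVec_neg_div_add_add {m n : Type*} [Fintype m] [Fintype n]
    (C : Matrix m n ℝ) (μ : m → ℝ) (τ : ℝ) (x v a : n → ℝ) :
    C *ᵥ (fun i => -(x i) / τ + v i + a i)
      = fun k => -((C *ᵥ x + μ) k) / τ + (C *ᵥ v) k + (C *ᵥ a) k + μ k / τ := by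
  have hfield : (fun i => -(x i) / τ + v i + a i) = (-τ⁻¹) • x + v + a := by
    funext i; simp only [Pi.add_apply, Pi.smul_apply, smul_eq_mul]; ring
  funext k
  simp only [hfield, mulVec_add, mulVec_smul, Pi.add_apply, Pi.smul_apply, smul_eq_mul]
  ring

theorem stmt_14_general (n N : ℕ) (τ : ℝ) (σ : ℝ → ℝ)
    (Wl : Matrix (Fin n) (Fin n) ℝ) (Bm : Matrix (Fin n) (Fin N) ℝ)
    (Cm : Matrix (Fin N) (Fin n) ℝ) (μ : Fin N → ℝ) (A₁ : Fin n → ℝ)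
    (x₀ : Fin n → ℝ) :
    -- forward direction: the lift of a solution solves the (n+N)-dimensional system
    (∀ xa : ℝ → Fin n → ℝ,
      xa 0 = x₀ →
      (∀ t : ℝ, ∀ i : Fin n,
        HasDerivAt (fun s => xa s i)
          (-(xa t i) / τ + A₁ i
            + (Wl * Bm).mulVec (fun j => σ ((Cm.mulVec (xa t) + μ) j)) i) t) →
      ((∀ t : ℝ, ∀ i : Fin n,
          HasDerivAt (fun s => xa s i)
            (-(xa t i) / τ
              + (Wl * Bm).mulVec (fun j => σ ((Cm.mulVec (xa t) + μ) j)) i + A₁ i) t) ∧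
        (∀ t : ℝ, ∀ k : Fin N,
          HasDerivAt (fun s => (Cm.mulVec (xa s) + μ) k)
            (-((Cm.mulVec (xa t) + μ) k) / τ
              + (Cm * (Wl * Bm)).mulVec (fun j => σ ((Cm.mulVec (xa t) + μ) j)) k
              + Cm.mulVec A₁ k + μ k / τ) t))) ∧
    -- converse: a solution of the lifted system with matching initial condition
    -- projects to a solution of the original system
    (∀ xa : ℝ → Fin n → ℝ, ∀ ya : ℝ → Fin N → ℝ,
      xa 0 = x₀ → ya 0 = Cm.mulVec x₀ + μ →
      (∀ t : ℝ, ∀ i : Fin n,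
        HasDerivAt (fun s => xa s i)
          (-(xa t i) / τ + (Wl * Bm).mulVec (fun j => σ (ya t j)) i + A₁ i) t) →
      (∀ t : ℝ, ∀ k : Fin N,
        HasDerivAt (fun s => ya s k)
          (-(ya t k) / τ + (Cm * (Wl * Bm)).mulVec (fun j => σ (ya t j)) k
            + Cm.mulVec A₁ k + μ k / τ) t) →
      ∀ t : ℝ, ∀ i : Fin n,
        HasDerivAt (fun s => xa s i)
          (-(xa t i) / τ + A₁ i
            + (Wl * Bm).mulVec (fun j => σ ((Cm.mulVec (xa t) + μ) j)) i) t) := by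
  refine ⟨fun xa _ hx => ?_, fun xa ya hx₀ hy₀ hx hy => ?_⟩
  · have hx' : ∀ t i, HasDerivAt (fun s => xa s i) (-(xa t i) / τ
        + ((Wl * Bm) *ᵥ fun j => σ ((Cm *ᵥ xa t + μ) j)) i + A₁ i) t :=
      fun t i => (hx t i).congr_deriv (by ring)
    refine ⟨hx', fun t => hasDerivAt_pi.mp ?_⟩
    have hlift := (hasDerivAt_pi.mpr (hx' t)).mulVec_add_const Cm μ
    rwa [mulVec_neg_div_add_add, mulVec_mulVec] at hlift
  · set F : ℝ → Fin N → ℝ := fun t =>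
      (Cm * (Wl * Bm)) *ᵥ (fun j => σ (ya t j)) + Cm *ᵥ A₁ + τ⁻¹ • μ
    have hyF : ∀ t, HasDerivAt ya ((-τ⁻¹) • ya t + F t) t := fun t =>
      hasDerivAt_pi.mpr fun k => (hy t k).congr_deriv <| by
        simp only [neg_smul, Pi.add_apply, Pi.neg_apply, Pi.smul_apply, smul_eq_mul, F]
        ring
    have hCxF : ∀ t,
        HasDerivAt (fun s => Cm *ᵥ xa s + μ) ((-τ⁻¹) • (Cm *ᵥ xa t + μ) + F t) t := by
      intro t
      have hlift := (hasDerivAt_pi.mpr (hx t)).mulVec_add_const Cm μ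
      rw [mulVec_neg_div_add_add, mulVec_mulVec] at hlift
      refine hlift.congr_deriv (funext fun k => ?_)
      simp only [neg_smul, Pi.add_apply, Pi.neg_apply, Pi.smul_apply, smul_eq_mul, F]
      ring
    have hya : ya = fun s => Cm *ᵥ xa s + μ :=
      eq_of_hasDerivAt_smul_add hyF hCxF (by rw [hy₀, hx₀])
    intro t i
    refine (hx t i).congr_deriv ?_
    rw [hya]
    ring

/-- Equivalence between the original approximating system and its lift
`z̃ = (x̃, ỹ)`, `ỹ = Cx̃ + μ`, which is an autonomous LTC-RNN-form system
`ż̃ = −z̃/τ + Wσ(z̃) + A + μ₁/τ` with block-triangular `W = [[0, W_lB],[0, CW_lB]]`,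
`A = (A₁, CA₁)`, `μ₁ = (0, μ)`. -/
theorem stmt_14 (n N : ℕ) (τ : ℝ) (hτ : 0 < τ) (σ : ℝ → ℝ)
    (Wl : Matrix (Fin n) (Fin n) ℝ) (Bm : Matrix (Fin n) (Fin N) ℝ)
    (Cm : Matrix (Fin N) (Fin n) ℝ) (μ : Fin N → ℝ) (A₁ : Fin n → ℝ)
    (x₀ : Fin n → ℝ) :
    -- forward direction: the lift of a solution solves the (n+N)-dimensional system
    (∀ xa : ℝ → Fin n → ℝ,
      xa 0 = x₀ →
      (∀ t : ℝ, ∀ i : Fin n,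
        HasDerivAt (fun s => xa s i)
          (-(xa t i) / τ + A₁ i
            + (Wl * Bm).mulVec (fun j => σ ((Cm.mulVec (xa t) + μ) j)) i) t) →
      ((∀ t : ℝ, ∀ i : Fin n,
          HasDerivAt (fun s => xa s i)
            (-(xa t i) / τ
              + (Wl * Bm).mulVec (fun j => σ ((Cm.mulVec (xa t) + μ) j)) i + A₁ i) t) ∧
        (∀ t : ℝ, ∀ k : Fin N,
          HasDerivAt (fun s => (Cm.mulVec (xa s) + μ) k)
            (-((Cm.mulVec (xa t) + μ) k) / τ
              + (Cm * (Wl * Bm)).mulVec (fun j => σ ((Cm.mulVec (xa t) + μ) j)) k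
              + Cm.mulVec A₁ k + μ k / τ) t))) ∧
    -- converse: a solution of the lifted system with matching initial condition
    -- projects to a solution of the original system
    (∀ xa : ℝ → Fin n → ℝ, ∀ ya : ℝ → Fin N → ℝ,
      xa 0 = x₀ → ya 0 = Cm.mulVec x₀ + μ →
      (∀ t : ℝ, ∀ i : Fin n,
        HasDerivAt (fun s => xa s i)
          (-(xa t i) / τ + (Wl * Bm).mulVec (fun j => σ (ya t j)) i + A₁ i) t) →
      (∀ t : ℝ, ∀ k : Fin N,
        HasDerivAt (fun s => ya s k)
          (-(ya t k) / τ + (Cm * (Wl * Bm)).mulVec (fun j => σ (ya t j)) k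
            + Cm.mulVec A₁ k + μ k / τ) t) →
      ∀ t : ℝ, ∀ i : Fin n,
        HasDerivAt (fun s => xa s i)
          (-(xa t i) / τ + A₁ i
            + (Wl * Bm).mulVec (fun j => σ ((Cm.mulVec (xa t) + μ) j)) i) t) :=
  stmt_14_general n N τ σ Wl Bm Cm μ A₁ x₀
end
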